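/- Let μ be a finite (signed) Borel measure on an open set Ω ⊆ ℝ^N, decomposed as μ = μ₀ + λ⁺ - λ⁻ where λ⁺, λ⁻ are nonnegative finite measures concentrated on disjoint Borel sets E⁺, E⁻ respectively, and μ₀ vanishes on all sets of zero p-capacity while λ⁺, λ⁻ are concentrated on sets of zero p-capacity. Then this decomposition is unique: if μ = ν₀ + σ⁺ - σ⁻ is another such decomposition, then μ₀ = ν₀, λ⁺ = σ⁺ and λ⁻ = σ⁻. -/

import Mathlib

open MeasureTheory
open scoped ENNReal

/-!
Let `Z` be the union of the four capacity-null sets carrying `λ⁺, λ⁻, σ⁺, σ⁻`. Since `c` is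
monotone, every measurable subset of each of them is capacity-null, so `μ₀` and `ν₀` vanish on
`Z`, while the four measures vanish off `Z`. Restricting the identity to `Zᶜ` gives `μ₀ = ν₀`;
what remains is `λ⁺ - λ⁻ = σ⁺ - σ⁻` with mutually singular parts on both sides, and the
uniqueness of the Jordan decomposition finishes the proof.
-/

namespace MeasureTheory

variable {Ω : Type*} [MeasurableSpace Ω]

namespace VectorMeasure

variable {M : Type*} [AddCommMonoid M] [TopologicalSpace M]

theorem restrict_eq_zero_of_subset {v : VectorMeasure Ω M} {s t : Set Ω}
    (hs : MeasurableSet s) (ht : MeasurableSet t) (hst : s ⊆ t) (hv : v.restrict t = 0) :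
    v.restrict s = 0 := by
  rw [← Set.inter_eq_left.mpr hst, ← restrict_restrict (v := v) hs ht, hv, restrict_zero]

theorem restrict_union_eq_zero [T2Space M] [ContinuousAdd M] {v : VectorMeasure Ω M}
    {s t : Set Ω} (hs : MeasurableSet s) (ht : MeasurableSet t)
    (hvs : v.restrict s = 0) (hvt : v.restrict t = 0) : v.restrict (s ∪ t) = 0 := by
  rw [← Set.union_sdiff_self, restrict_union Set.disjoint_sdiff_right hs (ht.diff hs), hvs,
    restrict_eq_zero_of_subset (ht.diff hs) ht Set.sdiff_subset hvt, add_zero]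

theorem eq_of_add_eq_add_of_restrict_eq_zero [T2Space M] [ContinuousAdd M]
    {v₁ v₂ w₁ w₂ : VectorMeasure Ω M} {Z : Set Ω} (hZ : MeasurableSet Z)
    (hv₁ : v₁.restrict Z = 0) (hv₂ : v₂.restrict Z = 0)
    (hw₁ : w₁.restrict Zᶜ = 0) (hw₂ : w₂.restrict Zᶜ = 0) (h : v₁ + w₁ = v₂ + w₂) :
    v₁ = v₂ :=
  calc v₁ = v₁.restrict Z + v₁.restrict Zᶜ := (restrict_add_restrict_compl hZ).symm
    _ = (v₁ + w₁).restrict Zᶜ := by rw [restrict_add, hv₁, hw₁, zero_add, add_zero]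
    _ = (v₂ + w₂).restrict Zᶜ := by rw [h]
    _ = v₂ := by rw [restrict_add, hw₂, add_zero, ← zero_add (v₂.restrict Zᶜ), ← hv₂,
      restrict_add_restrict_compl hZ]

end VectorMeasure

theorem SignedMeasure.restrict_eq_zero_of_capacity_eq_zero {c : Set Ω → ℝ≥0∞}
    (hc : Monotone c) {ρ : SignedMeasure Ω}
    (hρ : ∀ s : Set Ω, MeasurableSet s → c s = 0 → ρ s = 0)
    {A : Set Ω} (hA : MeasurableSet A) (hcA : c A = 0) : ρ.restrict A = 0 := by
  ext s hs
  rw [VectorMeasure.restrict_apply _ hA hs, zero_apply]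
  exact hρ _ (hs.inter hA) (le_antisymm (hcA ▸ hc Set.inter_subset_right) zero_le)

namespace Measure

theorem toSignedMeasure_restrict_compl_eq_zero {μ : Measure Ω} [IsFiniteMeasure μ]
    {s Z : Set Ω} (hZ : MeasurableSet Z) (hsZ : s ⊆ Z) (hμ : μ sᶜ = 0) :
    μ.toSignedMeasure.restrict Zᶜ = 0 := by
  rw [toSignedMeasure_restrict_eq_restrict_toSignedMeasure _ _ hZ.compl,
    ← toSignedMeasure_zero]
  exact toSignedMeasure_congr <|
    Measure.restrict_eq_zero.mpr (measure_mono_null (Set.compl_subset_compl.mpr hsZ) hμ)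

theorem mutuallySingular_of_compl_eq_zero {μ ν : Measure Ω} {s t : Set Ω}
    (hst : Disjoint s t) (hμ : μ sᶜ = 0) (hν : ν tᶜ = 0) : μ ⟂ₘ ν :=
  .mk hμ hν (by rw [← Set.compl_inter, hst.inter_eq, Set.compl_empty])

theorem eq_of_toSignedMeasure_sub_eq {μ₁ ν₁ μ₂ ν₂ : Measure Ω}
    [IsFiniteMeasure μ₁] [IsFiniteMeasure ν₁] [IsFiniteMeasure μ₂] [IsFiniteMeasure ν₂]
    (h₁ : μ₁ ⟂ₘ ν₁) (h₂ : μ₂ ⟂ₘ ν₂)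
    (h : μ₁.toSignedMeasure - ν₁.toSignedMeasure = μ₂.toSignedMeasure - ν₂.toSignedMeasure) :
    μ₁ = μ₂ ∧ ν₁ = ν₂ := by
  have hj : (⟨μ₁, ν₁, h₁⟩ : JordanDecomposition Ω) = ⟨μ₂, ν₂, h₂⟩ :=
    JordanDecomposition.toSignedMeasure_injective h
  exact ⟨congrArg JordanDecomposition.posPart hj, congrArg JordanDecomposition.negPart hj⟩

end Measure

end MeasureTheory

theorem decomposition_unique_general {Ω : Type*} [MeasurableSpace Ω]
    (c : Set Ω → ℝ≥0∞) (hcmono : Monotone c)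
    (μ₀ ν₀ : SignedMeasure Ω)
    (lp lm sp sm : Measure Ω)
    [IsFiniteMeasure lp] [IsFiniteMeasure lm] [IsFiniteMeasure sp] [IsFiniteMeasure sm]
    (hμ₀ : ∀ s : Set Ω, MeasurableSet s → c s = 0 → μ₀ s = 0)
    (hν₀ : ∀ s : Set Ω, MeasurableSet s → c s = 0 → ν₀ s = 0)
    (hl : ∃ Ep Em : Set Ω, MeasurableSet Ep ∧ MeasurableSet Em ∧ Disjoint Ep Em ∧
      c Ep = 0 ∧ c Em = 0 ∧ lp Epᶜ = 0 ∧ lm Emᶜ = 0)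
    (hs : ∃ Ep Em : Set Ω, MeasurableSet Ep ∧ MeasurableSet Em ∧ Disjoint Ep Em ∧
      c Ep = 0 ∧ c Em = 0 ∧ sp Epᶜ = 0 ∧ sm Emᶜ = 0)
    (heq : μ₀ + lp.toSignedMeasure - lm.toSignedMeasure =
      ν₀ + sp.toSignedMeasure - sm.toSignedMeasure) :
    μ₀ = ν₀ ∧ lp = sp ∧ lm = sm := by
  obtain ⟨Ep, Em, hEp, hEm, hEd, hcEp, hcEm, hlp, hlm⟩ := hl
  obtain ⟨Fp, Fm, hFp, hFm, hFd, hcFp, hcFm, hsp, hsm⟩ := hs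
  set Z := Ep ∪ Em ∪ (Fp ∪ Fm)
  have hZ : MeasurableSet Z := (hEp.union hEm).union (hFp.union hFm)
  have hrestrictZ : ∀ ρ : SignedMeasure Ω, (∀ s, MeasurableSet s → c s = 0 → ρ s = 0) →
      ρ.restrict Z = 0 := fun ρ hρ =>
    have h {A} := SignedMeasure.restrict_eq_zero_of_capacity_eq_zero (A := A) hcmono hρ
    VectorMeasure.restrict_union_eq_zero (hEp.union hEm) (hFp.union hFm)
      (VectorMeasure.restrict_union_eq_zero hEp hEm (h hEp hcEp) (h hEm hcEm))
      (VectorMeasure.restrict_union_eq_zero hFp hFm (h hFp hcFp) (h hFm hcFm))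
  rw [add_sub_assoc, add_sub_assoc] at heq
  have hμν : μ₀ = ν₀ := by
    refine VectorMeasure.eq_of_add_eq_add_of_restrict_eq_zero hZ (hrestrictZ μ₀ hμ₀)
      (hrestrictZ ν₀ hν₀) ?_ ?_ heq
    · rw [VectorMeasure.restrict_sub,
        Measure.toSignedMeasure_restrict_compl_eq_zero hZ (by grind) hlp,
        Measure.toSignedMeasure_restrict_compl_eq_zero hZ (by grind) hlm, sub_zero]
    · rw [VectorMeasure.restrict_sub,
        Measure.toSignedMeasure_restrict_compl_eq_zero hZ (by grind) hsp,
        Measure.toSignedMeasure_restrict_compl_eq_zero hZ (by grind) hsm, sub_zero]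
  subst hμν
  rw [add_right_inj] at heq
  exact ⟨rfl, Measure.eq_of_toSignedMeasure_sub_eq
    (Measure.mutuallySingular_of_compl_eq_zero hEd hlp hlm)
    (Measure.mutuallySingular_of_compl_eq_zero hFd hsp hsm) heq⟩

/-- Uniqueness of the decomposition `μ = μ₀ + λ⁺ - λ⁻`, where `μ₀` is absolutely
continuous with respect to the capacity `c` and `λ⁺, λ⁻` are nonnegative measures
concentrated on disjoint sets of zero capacity. -/
theorem decomposition_unique {Ω : Type*} [MeasurableSpace Ω]
    (c : Set Ω → ℝ≥0∞) (hc0 : c ∅ = 0) (hcmono : Monotone c)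
    (μ₀ ν₀ : SignedMeasure Ω)
    (lp lm sp sm : Measure Ω)
    [IsFiniteMeasure lp] [IsFiniteMeasure lm] [IsFiniteMeasure sp] [IsFiniteMeasure sm]
    (hμ₀ : ∀ s : Set Ω, MeasurableSet s → c s = 0 → μ₀ s = 0)
    (hν₀ : ∀ s : Set Ω, MeasurableSet s → c s = 0 → ν₀ s = 0)
    (hl : ∃ Ep Em : Set Ω, MeasurableSet Ep ∧ MeasurableSet Em ∧ Disjoint Ep Em ∧
      c Ep = 0 ∧ c Em = 0 ∧ lp Epᶜ = 0 ∧ lm Emᶜ = 0)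
    (hs : ∃ Ep Em : Set Ω, MeasurableSet Ep ∧ MeasurableSet Em ∧ Disjoint Ep Em ∧
      c Ep = 0 ∧ c Em = 0 ∧ sp Epᶜ = 0 ∧ sm Emᶜ = 0)
    (heq : μ₀ + lp.toSignedMeasure - lm.toSignedMeasure =
      ν₀ + sp.toSignedMeasure - sm.toSignedMeasure) :
    μ₀ = ν₀ ∧ lp = sp ∧ lm = sm :=
  decomposition_unique_general c hcmono μ₀ ν₀ lp lm sp sm hμ₀ hν₀ hl hs heq
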